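/- arXiv:2605.11449 — 2 statements merged into one kernel-verified Lean document; each statement's English description precedes it below -/
import Mathlib

section
/- Let (i_1,…,i_m) be a valid firing sequence in the Modified Kostant Game with active set I, let c^{(m)} be the resulting configuration, set w_m = s_{i_m} ⋯ s_{i_1} and β = Σ_{p∈I} β_p in the extended space E'. Then for every vertex v ∈ {1,…,n}, the vertex v is sad in the configuration c^{(m)} if and only if ⟨w_m(β), α_v^∨⟩ < 0. -/
open scoped Classical RealInnerProductSpace

noncomputable section

variable {n d : ℕ}

/-- The pairing `⟨β, γ^∨⟩ = 2(β,γ)/(γ,γ)` of a vector with a coroot. -/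
def rsPair (β γ : EuclideanSpace ℝ (Fin d)) : ℝ := 2 * ⟪β, γ⟫ / ⟪γ, γ⟫

/-- The coroot `γ^∨ = 2γ/(γ,γ)`. -/
def rsCoroot (γ : EuclideanSpace ℝ (Fin d)) : EuclideanSpace ℝ (Fin d) :=
  (2 / ⟪γ, γ⟫) • γ

/-- `⟨·, γ^∨⟩` as a linear functional. -/
def corootForm (γ : EuclideanSpace ℝ (Fin d)) : EuclideanSpace ℝ (Fin d) →ₗ[ℝ] ℝ where
  toFun x := 2 * ⟪x, γ⟫ / ⟪γ, γ⟫
  map_add' x y := by simp only [inner_add_left]; ring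
  map_smul' c x := by simp only [real_inner_smul_left, RingHom.id_apply, smul_eq_mul]; ring

/-- A finite reduced crystallographic root system in the Euclidean space `ℝ^d`, together with a
chosen base of simple roots `α 0, …, α (n-1)`: every root is an integral linear combination of
the simple roots with all coefficients nonnegative or all nonpositive. -/
structure RootSystemBase (n d : ℕ) : Type where
  Φ : Finset (EuclideanSpace ℝ (Fin d))
  α : Fin n → EuclideanSpace ℝ (Fin d)
  α_mem : ∀ i, α i ∈ Φ
  nonzero : ∀ β ∈ Φ, β ≠ 0
  reduced : ∀ β ∈ Φ, ∀ t : ℝ, t • β ∈ Φ → t = 1 ∨ t = -1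
  crystallographic : ∀ β ∈ Φ, ∀ γ ∈ Φ, ∃ k : ℤ, rsPair β γ = (k : ℝ)
  reflClosed : ∀ β ∈ Φ, ∀ γ ∈ Φ, β - rsPair β γ • γ ∈ Φ
  indep : LinearIndependent ℝ α
  base : ∀ β ∈ Φ, ∃ c : Fin n → ℤ,
    β = ∑ i, (c i : ℝ) • α i ∧ ((∀ i, 0 ≤ c i) ∨ (∀ i, c i ≤ 0))

/-- The extended space `E' = E ⊕ ℝ^I`. -/
abbrev ExtSp (n d : ℕ) (I : Finset (Fin n)) : Type :=
  EuclideanSpace ℝ (Fin d) × ({p : Fin n // p ∈ I} → ℝ)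

/-- The total source vector `β = ∑_{p ∈ I} β_p` in the extended space. -/
def betaVec (n d : ℕ) (I : Finset (Fin n)) : ExtSp n d I := (0, fun _ => 1)

namespace RootSystemBase

variable (R : RootSystemBase n d)

lemma alpha_ne_zero (i : Fin n) : R.α i ≠ 0 := R.nonzero _ (R.α_mem i)

lemma inner_alpha_ne_zero (i : Fin n) : ⟪R.α i, R.α i⟫ ≠ 0 := fun h =>
  R.alpha_ne_zero i ((inner_self_eq_zero (𝕜 := ℝ)).mp h)

lemma corootForm_alpha_self (i : Fin n) : corootForm (R.α i) (R.α i) = 2 := by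
  have h2 := R.inner_alpha_ne_zero i
  show 2 * ⟪R.α i, R.α i⟫ / ⟪R.α i, R.α i⟫ = 2
  rw [mul_div_assoc, div_self h2, mul_one]

/-- The simple reflection `s_i : x ↦ x - ⟨x, α_i^∨⟩ α_i` as a linear automorphism of `E`. -/
def sRefl (i : Fin n) :
    EuclideanSpace ℝ (Fin d) ≃ₗ[ℝ] EuclideanSpace ℝ (Fin d) :=
  Module.reflection (R.corootForm_alpha_self i)

/-- The Weyl group `W`, as the subgroup of linear automorphisms of `E` generated by the
simple reflections. -/
def weyl : Subgroup (EuclideanSpace ℝ (Fin d) ≃ₗ[ℝ] EuclideanSpace ℝ (Fin d)) :=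
  Subgroup.closure (Set.range R.sRefl)

/-- `wordProd [i₁, …, i_t] = s_{i₁} ⋯ s_{i_t}`. -/
def wordProd (l : List (Fin n)) :
    EuclideanSpace ℝ (Fin d) ≃ₗ[ℝ] EuclideanSpace ℝ (Fin d) :=
  (l.map R.sRefl).prod

/-- The Weyl group element `s_{i_t} ⋯ s_{i_1}` associated to the firing sequence
`(i_1, …, i_t)`. -/
def seqProd (l : List (Fin n)) :
    EuclideanSpace ℝ (Fin d) ≃ₗ[ℝ] EuclideanSpace ℝ (Fin d) :=
  (l.reverse.map R.sRefl).prod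

/-- The length function `ℓ` of the Coxeter system `(W, S)`: the minimal number of simple
reflections needed to express `w`. -/
def len (w : EuclideanSpace ℝ (Fin d) ≃ₗ[ℝ] EuclideanSpace ℝ (Fin d)) : ℕ :=
  sInf {t | ∃ l : List (Fin n), l.length = t ∧ R.wordProd l = w}

/-- The set `W^J` of minimal length representatives of `W/W_J`, for `J = S \ {s_i : i ∈ I}`:
those `w ∈ W` with `ℓ(w s_j) > ℓ(w)` for all `j ∉ I`. -/
def minReps (I : Finset (Fin n)) :
    Set (EuclideanSpace ℝ (Fin d) ≃ₗ[ℝ] EuclideanSpace ℝ (Fin d)) :=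
  {w | w ∈ R.weyl ∧ ∀ j, j ∉ I → R.len w < R.len (w * R.sRefl j)}

/-- The Cartan matrix `a_{uv} = ⟨α_u, α_v^∨⟩` (an integer by crystallinity). -/
def cartan (u v : Fin n) : ℤ := ⌊rsPair (R.α u) (R.α v)⌋

/-- The set `Φ⁺` of positive roots. -/
def posRoots : Finset (EuclideanSpace ℝ (Fin d)) :=
  R.Φ.filter fun β => ∃ c : Fin n → ℤ, β = ∑ i, (c i : ℝ) • R.α i ∧ ∀ i, 0 ≤ c i

/-- The set `Φ_P⁺` of positive roots lying in the span of the simple roots `α_j`, `j ∈ P`. -/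
def parPos (P : Finset (Fin n)) : Finset (EuclideanSpace ℝ (Fin d)) :=
  R.posRoots.filter fun β => β ∈ Submodule.span ℝ (R.α '' (P : Set (Fin n)))

/-- `∑_{u ≠ v} (−a_{uv}) c_u + [v ∈ I]`. -/
def chipBound (I : Finset (Fin n)) (c : Fin n → ℤ) (v : Fin n) : ℤ :=
  (∑ u ∈ Finset.univ.erase v, -(R.cartan u v) * c u) + (if v ∈ I then 1 else 0)

/-- Vertex `v` is sad in the configuration `c` (Modified Kostant Game with active set `I`). -/
def Sad (I : Finset (Fin n)) (c : Fin n → ℤ) (v : Fin n) : Prop :=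
  2 * c v < R.chipBound I c v

/-- Firing vertex `v`. -/
def fire (I : Finset (Fin n)) (c : Fin n → ℤ) (v : Fin n) : Fin n → ℤ :=
  Function.update c v (R.chipBound I c v - c v)

end RootSystemBase

/-- `ValidFrom R I c l`: starting from the configuration `c`, the sequence `l` fires a sad
vertex at each step. -/
def RootSystemBase.ValidFrom (R : RootSystemBase n d) (I : Finset (Fin n)) :
    (Fin n → ℤ) → List (Fin n) → Prop
  | _, [] => True
  | c, v :: l => R.Sad I c v ∧ RootSystemBase.ValidFrom R I (R.fire I c v) l

namespace RootSystemBase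

variable (R : RootSystemBase n d)

/-- A valid firing sequence: starts at the zero configuration and fires a sad vertex at
each step. -/
def Valid (I : Finset (Fin n)) (l : List (Fin n)) : Prop := R.ValidFrom I 0 l

/-- The configuration reached after playing the sequence `l` from the zero configuration. -/
def play (I : Finset (Fin n)) (l : List (Fin n)) : Fin n → ℤ :=
  l.foldl (R.fire I) 0

/-- A maximal valid firing sequence: no vertex is sad in the final configuration. -/
def MaximalSeq (I : Finset (Fin n)) (l : List (Fin n)) : Prop :=
  R.Valid I l ∧ ∀ v, ¬ R.Sad I (R.play I l) v

/-- The (integer) coefficients of a vector in the basis of simple coroots, when they exist. -/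
def corootCoeffs (x : EuclideanSpace ℝ (Fin d)) : Fin n → ℤ :=
  if h : ∃ k : Fin n → ℤ, x = ∑ j, (k j : ℝ) • rsCoroot (R.α j) then h.choose else 0

/-- The `I`-height of a (co)vector: the sum over `j ∈ I` of its coefficients in the basis
of simple coroots. -/
def htI (I : Finset (Fin n)) (x : EuclideanSpace ℝ (Fin d)) : ℤ :=
  ∑ j ∈ I, R.corootCoeffs x j

end RootSystemBase

/-- The extended pairing `⟨·, α_i^∨⟩` on `E' = E ⊕ ℝ^I`, determined by
`⟨β_p, α_i^∨⟩ = −δ_{pi}`, as a linear functional. -/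
def extForm (R : RootSystemBase n d) (I : Finset (Fin n)) (i : Fin n) :
    ExtSp n d I →ₗ[ℝ] ℝ :=
  (corootForm (R.α i)).comp (LinearMap.fst ℝ _ _) -
    (if h : i ∈ I then
      (LinearMap.proj (R := ℝ) (φ := fun _ : {p : Fin n // p ∈ I} => ℝ) ⟨i, h⟩).comp
        (LinearMap.snd ℝ _ _)
    else 0)

namespace RootSystemBase

variable (R : RootSystemBase n d)

lemma extForm_apply (I : Finset (Fin n)) (i : Fin n) (x : ExtSp n d I) :
    extForm R I i x = corootForm (R.α i) x.1 - (if h : i ∈ I then x.2 ⟨i, h⟩ else 0) := by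
  by_cases h : i ∈ I <;> simp [extForm, h]

lemma extForm_alpha (I : Finset (Fin n)) (i : Fin n) :
    extForm R I i ((R.α i, 0) : ExtSp n d I) = 2 := by
  rw [R.extForm_apply]
  simp [R.corootForm_alpha_self i]

/-- The simple reflection `s_i : x ↦ x − ⟨x, α_i^∨⟩ α_i` on the extended space `E'`. -/
def extRefl (I : Finset (Fin n)) (i : Fin n) : ExtSp n d I ≃ₗ[ℝ] ExtSp n d I :=
  Module.reflection (R.extForm_alpha I i)

/-- The extended pairing `⟨x, α_i^∨⟩` for `x ∈ E'`. -/
def extPair (I : Finset (Fin n)) (x : ExtSp n d I) (i : Fin n) : ℝ := extForm R I i x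

/-- The action of `s_{i_t} ⋯ s_{i_1}` on the extended space `E'`. -/
def extSeqProd (I : Finset (Fin n)) (l : List (Fin n)) : ExtSp n d I ≃ₗ[ℝ] ExtSp n d I :=
  (l.reverse.map (R.extRefl I)).prod

end RootSystemBase

/-! A configuration `c` is encoded by the vector `x_c = β + ∑ᵤ c_u α_u` of `E'`. Its pairing with
`α_v^∨` is `2 c_v - (∑_{u ≠ v} (−a_{uv}) c_u + [v ∈ I])`, so `v` is sad exactly when this pairing is
negative, and firing `v` changes `c_v` by minus that pairing, which is the effect of `s_v` on `x_c`.
Hence `w_m(β) = x_{c^{(m)}}`. -/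

namespace RootSystemBase

variable (R : RootSystemBase n d) (I : Finset (Fin n))

lemma intCast_cartan (u v : Fin n) : (R.cartan u v : ℝ) = rsPair (R.α u) (R.α v) := by
  obtain ⟨k, hk⟩ := R.crystallographic _ (R.α_mem u) _ (R.α_mem v)
  rw [cartan, hk, Int.floor_intCast]

lemma cartan_self (v : Fin n) : R.cartan v v = 2 := by
  have h : (R.cartan v v : ℝ) = 2 := by
    rw [intCast_cartan]
    exact R.corootForm_alpha_self v
  exact_mod_cast h

lemma corootForm_sum_smul_alpha (c : Fin n → ℤ) (v : Fin n) :
    corootForm (R.α v) (∑ u, (c u : ℝ) • R.α u) = ((∑ u, R.cartan u v * c u : ℤ) : ℝ) := by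
  push_cast
  simp only [map_sum, map_smul, smul_eq_mul, intCast_cartan, mul_comm]
  rfl

lemma two_mul_sub_chipBound (c : Fin n → ℤ) (v : Fin n) :
    2 * c v - R.chipBound I c v = (∑ u, R.cartan u v * c u) - (if v ∈ I then 1 else 0) := by
  rw [chipBound, ← Finset.add_sum_erase _ _ (Finset.mem_univ v), cartan_self]
  simp only [neg_mul, Finset.sum_neg_distrib]
  ring

def configVec (c : Fin n → ℤ) : ExtSp n d I := (∑ u, (c u : ℝ) • R.α u, fun _ => 1)

lemma configVec_zero : R.configVec I 0 = betaVec n d I := by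
  simp [configVec, betaVec]

lemma configVec_add_single (c : Fin n → ℤ) (v : Fin n) (k : ℤ) :
    R.configVec I (c + Pi.single v k) = R.configVec I c + (k : ℝ) • ((R.α v, 0) : ExtSp n d I) := by
  ext1
  · simp [configVec, add_smul, Finset.sum_add_distrib, Pi.single_apply]
  · simp [configVec]

lemma extPair_configVec (c : Fin n → ℤ) (v : Fin n) :
    R.extPair I (R.configVec I c) v = ((2 * c v - R.chipBound I c v : ℤ) : ℝ) := by
  rw [extPair, extForm_apply, configVec, corootForm_sum_smul_alpha, two_mul_sub_chipBound]
  split_ifs <;> simp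

lemma sad_iff_extPair_configVec_neg (c : Fin n → ℤ) (v : Fin n) :
    R.Sad I c v ↔ R.extPair I (R.configVec I c) v < 0 := by
  rw [extPair_configVec, Sad, Int.cast_lt_zero, sub_neg]

lemma fire_eq_add_single (c : Fin n → ℤ) (v : Fin n) :
    R.fire I c v = c + Pi.single v (R.chipBound I c v - 2 * c v) := by
  ext u
  rcases eq_or_ne u v with rfl | huv
  · simp only [fire, Function.update_self, Pi.add_apply, Pi.single_eq_same]
    ring
  · simp [fire, huv]

lemma extRefl_configVec (c : Fin n → ℤ) (v : Fin n) :
    R.extRefl I v (R.configVec I c) = R.configVec I (R.fire I c v) := by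
  rw [extRefl, Module.reflection_apply, fire_eq_add_single, configVec_add_single]
  change _ - R.extPair I _ v • _ = _
  rw [extPair_configVec, sub_eq_add_neg, ← neg_smul, ← Int.cast_neg, neg_sub]

lemma extSeqProd_concat (l : List (Fin n)) (v : Fin n) :
    R.extSeqProd I (l ++ [v]) = R.extRefl I v * R.extSeqProd I l := by
  simp [extSeqProd]

lemma play_concat (l : List (Fin n)) (v : Fin n) :
    R.play I (l ++ [v]) = R.fire I (R.play I l) v := by
  simp [play]

lemma extSeqProd_betaVec (l : List (Fin n)) :
    R.extSeqProd I l (betaVec n d I) = R.configVec I (R.play I l) := by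
  induction l using List.reverseRecOn with
  | nil => simp [extSeqProd, play, configVec_zero]
  | append_singleton l v ih =>
    rw [extSeqProd_concat, LinearEquiv.mul_apply, ih, extRefl_configVec, play_concat]

end RootSystemBase

theorem statement10_general {n d : ℕ} (R : RootSystemBase n d) (I : Finset (Fin n))
    (l : List (Fin n)) (v : Fin n) :
    R.Sad I (R.play I l) v ↔
      R.extPair I (R.extSeqProd I l (betaVec n d I)) v < 0 := by
  rw [R.extSeqProd_betaVec, R.sad_iff_extPair_configVec_neg]

/-- For a valid firing sequence with resulting configuration `c^{(m)}` and
`w_m = s_{i_m} ⋯ s_{i_1}`, a vertex `v` is sad in `c^{(m)}` iff `⟨w_m(β), α_v^∨⟩ < 0`. -/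
theorem statement10 {n d : ℕ} (R : RootSystemBase n d) (I : Finset (Fin n))
    (l : List (Fin n)) (hl : R.Valid I l) (v : Fin n) :
    R.Sad I (R.play I l) v ↔
      R.extPair I (R.extSeqProd I l (betaVec n d I)) v < 0 :=
  statement10_general R I l v
end
end

section
/- For any subset Δ_P ⊆ Δ of the simple roots of a finite crystallographic root system Φ, the inequality Σ_{β ∈ Δ \ Δ_P} ( Σ_{α ∈ Φ^+ \ Φ_{Δ_P}^+} ⟨α, β^∨⟩ − 1 ) ≤ |Φ^+ \ Φ_{Δ_P}^+| holds. -/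
/-!
For `b ∉ P` the reflection `s_b` permutes `Φ⁺ \ {α_b}` and negates `⟨·, α_b^∨⟩`, so the pairings
of all positive roots with `α_b^∨` sum to `2`, and the `b`-th summand equals
`1 + ∑_{a ∈ Φ⁺_P} -⟨a, α_b^∨⟩`. If `m = -⟨a, α_b^∨⟩ > 0`, the `α_b`-string through `a` contains
`a + α_b, …, a + m α_b`; these roots, together with `α_b`, are distinct elements of
`Φ⁺_{P ∪ {b}} \ Φ⁺_P`. By linear independence of the simple roots these sets are disjoint for
distinct `b`, and all lie in `Φ⁺ \ Φ⁺_P`.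
-/

open scoped Classical RealInnerProductSpace

noncomputable section

variable {n d : ℕ}

theorem LinearIndependent.mem_span_image_inter {ι R M : Type*} [Semiring R] [AddCommMonoid M]
    [Module R M] {v : ι → M} (hv : LinearIndependent R v) {s t : Set ι} {x : M}
    (hs : x ∈ Submodule.span R (v '' s)) (ht : x ∈ Submodule.span R (v '' t)) :
    x ∈ Submodule.span R (v '' (s ∩ t)) := by
  rw [Finsupp.mem_span_image_iff_linearCombination] at hs ht ⊢
  obtain ⟨l, hls, rfl⟩ := hs
  obtain ⟨l', hlt, hll'⟩ := ht
  rw [hv.finsuppLinearCombination_injective.eq_iff] at hll'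
  subst hll'
  refine ⟨l', ?_, rfl⟩
  rw [Finsupp.supported_inter]
  exact ⟨hls, hlt⟩

section Pairing

variable {β γ : EuclideanSpace ℝ (Fin d)}

lemma rsPair_eq_corootForm (β γ : EuclideanSpace ℝ (Fin d)) : rsPair β γ = corootForm γ β := rfl

lemma rsPair_self (hγ : γ ≠ 0) : rsPair γ γ = 2 := by
  have : ⟪γ, γ⟫ ≠ 0 := inner_self_ne_zero.mpr hγ
  rw [rsPair]
  field_simp

lemma rsPair_add_smul_self (hγ : γ ≠ 0) (t : ℝ) : rsPair (β + t • γ) γ = rsPair β γ + 2 * t := by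
  rw [rsPair_eq_corootForm, map_add, map_smul, smul_eq_mul, ← rsPair_eq_corootForm,
    ← rsPair_eq_corootForm, rsPair_self hγ]
  ring

lemma rsPair_neg_iff (hγ : γ ≠ 0) : rsPair β γ < 0 ↔ ⟪β, γ⟫ < 0 := by
  rw [rsPair, div_lt_iff₀ (real_inner_self_pos.mpr hγ), zero_mul]
  constructor <;> intro h <;> linarith

/-- The strict Cauchy–Schwarz inequality, in terms of the pairing. -/
lemma rsPair_mul_rsPair_lt_four (h : β ∉ ℝ ∙ γ) : rsPair β γ * rsPair γ β < 4 := by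
  rcases eq_or_ne γ 0 with rfl | hγ
  · simp [rsPair]
  have hβ : β ≠ 0 := fun hβ => h (hβ ▸ Submodule.zero_mem _)
  have hlt : |⟪β, γ⟫| < ‖β‖ * ‖γ‖ := by
    refine (abs_real_inner_le_norm β γ).lt_of_ne fun heq => h ?_
    obtain ⟨r, hr, hγr⟩ := (norm_inner_eq_norm_iff (𝕜 := ℝ) hβ hγ).mp (by simpa using heq)
    exact Submodule.mem_span_singleton.mpr ⟨r⁻¹, by rw [hγr, inv_smul_smul₀ hr]⟩
  have hsq : ⟪β, γ⟫ * ⟪β, γ⟫ < ⟪β, β⟫ * ⟪γ, γ⟫ := by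
    rw [real_inner_self_eq_norm_mul_norm, real_inner_self_eq_norm_mul_norm, ← abs_mul_abs_self]
    nlinarith [abs_nonneg ⟪β, γ⟫]
  have hβ' := real_inner_self_pos.mpr hβ
  have hγ' := real_inner_self_pos.mpr hγ
  rw [rsPair, rsPair, real_inner_comm β γ, div_mul_div_comm, div_lt_iff₀ (by positivity)]
  nlinarith

end Pairing

namespace RootSystemBase

variable (R : RootSystemBase n d)

lemma posRoots_subset : R.posRoots ⊆ R.Φ := Finset.filter_subset _ _

lemma coeff_unique {c c' : Fin n → ℝ} (h : ∑ i, c i • R.α i = ∑ i, c' i • R.α i) : c = c' :=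
  R.indep.fintypeLinearCombination_injective (by simpa [Fintype.linearCombination_apply] using h)

lemma coeff_nonneg_of_mem_posRoots {β : EuclideanSpace ℝ (Fin d)} (hβ : β ∈ R.posRoots)
    {c : Fin n → ℝ} (hc : β = ∑ i, c i • R.α i) (i : Fin n) : 0 ≤ c i := by
  obtain ⟨-, k, hk, hpos⟩ := Finset.mem_filter.mp hβ
  rw [R.coeff_unique (hc.symm.trans hk)]
  exact Int.cast_nonneg (hpos i)

lemma mem_posRoots_of_coeff_pos {β : EuclideanSpace ℝ (Fin d)} (hβ : β ∈ R.Φ)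
    {c : Fin n → ℝ} (hc : β = ∑ i, c i • R.α i) {i : Fin n} (hi : 0 < c i) :
    β ∈ R.posRoots := by
  obtain ⟨k, hk, hpos | hneg⟩ := R.base β hβ
  · exact Finset.mem_filter.mpr ⟨hβ, k, hk, hpos⟩
  · have hki : (k i : ℝ) ≤ 0 := by exact_mod_cast hneg i
    rw [R.coeff_unique (hc.symm.trans hk)] at hi
    exact absurd hi hki.not_gt

lemma alpha_mem_posRoots (b : Fin n) : R.α b ∈ R.posRoots :=
  R.mem_posRoots_of_coeff_pos (R.α_mem b) (c := Pi.single b 1) (i := b)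
    (by simp [Pi.single_apply]) (by simp)

lemma add_smul_alpha_mem_posRoots {a : EuclideanSpace ℝ (Fin d)} (ha : a ∈ R.posRoots)
    {b : Fin n} (hab : a ∉ ℝ ∙ R.α b) {t : ℝ} (h : a + t • R.α b ∈ R.Φ) :
    a + t • R.α b ∈ R.posRoots := by
  obtain ⟨-, k, hk, hpos⟩ := Finset.mem_filter.mp ha
  -- a coefficient of `a` away from `b` is positive, and adding `t • α b` does not change it
  obtain ⟨i, hib, hki⟩ : ∃ i ≠ b, k i ≠ 0 := by
    by_contra! h0
    refine hab (Submodule.mem_span_singleton.mpr ⟨k b, ?_⟩)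
    rw [hk, Finset.sum_eq_single b (fun i _ hi => by simp [h0 i hi]) (by simp)]
  refine R.mem_posRoots_of_coeff_pos h (c := fun j => k j + (Pi.single b t : Fin n → ℝ) j)
    (i := i) ?_ ?_
  · simp [hk, add_smul, Finset.sum_add_distrib, Pi.single_apply]
  · have : 0 < k i := lt_of_le_of_ne (hpos i) (Ne.symm hki)
    simp [hib, this]

lemma notMem_span_alpha_of_mem_posRoots {a : EuclideanSpace ℝ (Fin d)} (ha : a ∈ R.posRoots)
    {b : Fin n} (hne : a ≠ R.α b) : a ∉ ℝ ∙ R.α b := by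
  rintro hab
  obtain ⟨t, rfl⟩ := Submodule.mem_span_singleton.mp hab
  rcases R.reduced _ (R.α_mem b) t (R.posRoots_subset ha) with rfl | rfl
  · simp at hne
  · have := R.coeff_nonneg_of_mem_posRoots ha (c := Pi.single b (-1)) (by simp [Pi.single_apply]) b
    norm_num at this

lemma sRefl_apply (b : Fin n) (a : EuclideanSpace ℝ (Fin d)) :
    R.sRefl b a = a - rsPair a (R.α b) • R.α b := rfl

lemma rsPair_sRefl (b : Fin n) (a : EuclideanSpace ℝ (Fin d)) :
    rsPair (R.sRefl b a) (R.α b) = -rsPair a (R.α b) := by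
  rw [sRefl_apply, sub_eq_add_neg, ← neg_smul, rsPair_add_smul_self (R.alpha_ne_zero b)]
  ring

lemma sRefl_mem_posRoots_erase {b : Fin n} {a : EuclideanSpace ℝ (Fin d)}
    (ha : a ∈ R.posRoots.erase (R.α b)) : R.sRefl b a ∈ R.posRoots.erase (R.α b) := by
  obtain ⟨hne, hpos⟩ := Finset.mem_erase.mp ha
  have hab := R.notMem_span_alpha_of_mem_posRoots hpos hne
  have hmem : a + (-rsPair a (R.α b)) • R.α b ∈ R.Φ := by
    simpa [sub_eq_add_neg] using R.reflClosed a (R.posRoots_subset hpos) _ (R.α_mem b)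
  refine Finset.mem_erase.mpr ⟨fun h => hab ?_, ?_⟩
  · refine Submodule.mem_span_singleton.mpr ⟨1 + rsPair a (R.α b), ?_⟩
    calc (1 + rsPair a (R.α b)) • R.α b = R.sRefl b a + rsPair a (R.α b) • R.α b := by
          rw [h, add_smul, one_smul]
      _ = a := by rw [sRefl_apply, sub_add_cancel]
  · simpa [sRefl_apply, sub_eq_add_neg] using R.add_smul_alpha_mem_posRoots hpos hab hmem

/-- `⟨2ρ, α_b^∨⟩ = 2`: the reflection `s_b` permutes `Φ⁺ \ {α_b}` and negates the pairing. -/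
lemma sum_rsPair_posRoots (b : Fin n) : ∑ a ∈ R.posRoots, rsPair a (R.α b) = 2 := by
  rw [← Finset.add_sum_erase _ _ (R.alpha_mem_posRoots b), rsPair_self (R.alpha_ne_zero b),
    add_eq_left]
  refine Finset.sum_involution (fun a _ => R.sRefl b a) (fun a _ => by simp [rsPair_sRefl])
    (fun a _ hpair hfix => hpair ?_) (fun a ha => R.sRefl_mem_posRoots_erase ha)
    (fun a _ => Module.involutive_reflection _ a)
  have h := congrArg (rsPair · (R.α b)) hfix
  simp only [rsPair_sRefl] at h
  linarith

lemma add_mem_of_rsPair_neg {β γ : EuclideanSpace ℝ (Fin d)} (hβ : β ∈ R.Φ) (hγ : γ ∈ R.Φ)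
    (hβγ : β ∉ ℝ ∙ γ) (hneg : rsPair β γ < 0) : β + γ ∈ R.Φ := by
  obtain ⟨p, hp⟩ := R.crystallographic β hβ γ hγ
  obtain ⟨q, hq⟩ := R.crystallographic γ hγ β hβ
  have hp0 : p < 0 := by exact_mod_cast hp ▸ hneg
  have hq0 : q < 0 := by
    have : rsPair γ β < 0 := by
      rw [rsPair_neg_iff (R.nonzero β hβ), real_inner_comm]
      exact (rsPair_neg_iff (R.nonzero γ hγ)).mp hneg
    exact_mod_cast hq ▸ this
  have hpq : p * q < 4 := by exact_mod_cast hp ▸ hq ▸ rsPair_mul_rsPair_lt_four hβγ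
  -- two negative integers with product below 4: one of them is `-1`
  obtain rfl | rfl : p = -1 ∨ q = -1 := by
    by_contra! h
    nlinarith [show p ≤ -2 by omega, show q ≤ -2 by omega]
  · simpa [hp] using R.reflClosed β hβ γ hγ
  · simpa [hq, add_comm] using R.reflClosed γ hγ β hβ

/-- Climb the `γ`-string through `β` while the pairing with `γ^∨` is negative; the upper half of
the string is the reflection of the lower half. -/
lemma add_nsmul_mem_of_le {β γ : EuclideanSpace ℝ (Fin d)} (hβ : β ∈ R.Φ) (hγ : γ ∈ R.Φ)
    (hβγ : β ∉ ℝ ∙ γ) {m : ℕ} (hm : rsPair β γ = -m) {k : ℕ} (hk : k ≤ m) :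
    β + (k : ℝ) • γ ∈ R.Φ := by
  have hγ0 := R.nonzero γ hγ
  induction k using Nat.strong_induction_on with
  | _ k ih =>
  rcases k with _ | j
  · simpa using hβ
  by_cases hj : 2 * j < m
  · have hmem := ih j (by omega) (by omega)
    have hspan : β + (j : ℝ) • γ ∉ ℝ ∙ γ := fun h => hβγ <| by
      simpa using sub_mem h (Submodule.smul_mem _ (j : ℝ) (Submodule.mem_span_singleton_self γ))
    have hneg : rsPair (β + (j : ℝ) • γ) γ < 0 := by
      have : (2 * j : ℝ) < m := by exact_mod_cast hj
      rw [rsPair_add_smul_self hγ0, hm]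
      linarith
    convert R.add_mem_of_rsPair_neg hmem hγ hspan hneg using 1
    push_cast
    module
  · have hmem := ih (m - (j + 1)) (by omega) (by omega)
    convert R.reflClosed _ hmem γ hγ using 1
    rw [rsPair_add_smul_self hγ0, hm, Nat.cast_sub (by omega)]
    push_cast
    module

lemma natFloor_neg_rsPair {β γ : EuclideanSpace ℝ (Fin d)} (hβ : β ∈ R.Φ) (hγ : γ ∈ R.Φ) :
    (⌊-rsPair β γ⌋₊ : ℝ) = max (-rsPair β γ) 0 := by
  obtain ⟨z, hz⟩ := R.crystallographic β hβ γ hγ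
  have hneg : -rsPair β γ = ((-z : ℤ) : ℝ) := by rw [hz, Int.cast_neg]
  rcases le_total 0 (-rsPair β γ) with h | h
  · rw [natCast_floor_eq_intCast_floor h, max_eq_left h, hneg, Int.floor_intCast]
  · rw [Nat.floor_of_nonpos h, max_eq_right h, Nat.cast_zero]

section Parabolic

variable {R} {P : Finset (Fin n)} {b : Fin n}

lemma mem_parPos {β : EuclideanSpace ℝ (Fin d)} :
    β ∈ R.parPos P ↔ β ∈ R.posRoots ∧ β ∈ Submodule.span ℝ (R.α '' P) :=
  Finset.mem_filter

lemma parPos_subset_posRoots : R.parPos P ⊆ R.posRoots := Finset.filter_subset _ _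

lemma eq_zero_of_smul_alpha_mem_span (hb : b ∉ P) {t : ℝ}
    (h : t • R.α b ∈ Submodule.span ℝ (R.α '' P)) : t = 0 := by
  by_contra ht
  exact R.indep.notMem_span_image (s := P) hb ((Submodule.smul_mem_iff _ ht).mp h)

lemma notMem_span_alpha_of_mem_parPos (hb : b ∉ P) {a : EuclideanSpace ℝ (Fin d)}
    (ha : a ∈ R.parPos P) : a ∉ ℝ ∙ R.α b := by
  intro hab
  obtain ⟨t, rfl⟩ := Submodule.mem_span_singleton.mp hab
  have ht := eq_zero_of_smul_alpha_mem_span hb (mem_parPos.mp ha).2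
  exact R.nonzero _ (R.posRoots_subset (mem_parPos.mp ha).1) (by simp [ht])

lemma alpha_mem_span_insert : R.α b ∈ Submodule.span ℝ (R.α '' ↑(insert b P)) :=
  Submodule.subset_span (Set.mem_image_of_mem _ (by simp))

lemma alpha_mem_parPos_insert_sdiff (hb : b ∉ P) :
    R.α b ∈ R.parPos (insert b P) \ R.parPos P :=
  Finset.mem_sdiff.mpr ⟨mem_parPos.mpr ⟨R.alpha_mem_posRoots b, alpha_mem_span_insert⟩,
    fun h => R.indep.notMem_span_image (s := P) hb (mem_parPos.mp h).2⟩

lemma add_smul_alpha_mem_parPos_insert_sdiff (hb : b ∉ P) {a : EuclideanSpace ℝ (Fin d)}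
    (ha : a ∈ R.parPos P) {k : ℕ} (hk0 : 0 < k) (hk : k ≤ ⌊-rsPair a (R.α b)⌋₊) :
    a + (k : ℝ) • R.α b ∈ R.parPos (insert b P) \ R.parPos P := by
  obtain ⟨hpos, hspan⟩ := mem_parPos.mp ha
  have haΦ := R.posRoots_subset hpos
  have hab := notMem_span_alpha_of_mem_parPos hb ha
  have hm : rsPair a (R.α b) = -⌊-rsPair a (R.α b)⌋₊ := by
    have hfloor := R.natFloor_neg_rsPair haΦ (R.α_mem b)
    have := Nat.floor_pos.mp (hk0.trans_le hk)
    rw [max_eq_left (by linarith)] at hfloor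
    linarith
  have hmem := R.add_nsmul_mem_of_le haΦ (R.α_mem b) hab hm hk
  have hspan_insert : Submodule.span ℝ (R.α '' P) ≤ Submodule.span ℝ (R.α '' ↑(insert b P)) :=
    Submodule.span_mono (Set.image_mono (by simp))
  refine Finset.mem_sdiff.mpr ⟨mem_parPos.mpr ⟨R.add_smul_alpha_mem_posRoots hpos hab hmem, ?_⟩,
    fun h => ?_⟩
  · exact add_mem (hspan_insert hspan) (Submodule.smul_mem _ _ alpha_mem_span_insert)
  · have := sub_mem (mem_parPos.mp h).2 hspan
    rw [add_sub_cancel_left] at this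
    exact hk0.ne' (by exact_mod_cast eq_zero_of_smul_alpha_mem_span hb this)

/-- The injection `(a, k) ↦ a + (k + 1) α_b`, for `a ∈ Φ⁺_P` and `k < -⟨a, α_b^∨⟩`, misses
`α_b`. -/
lemma card_parPos_insert_sdiff_ge (hb : b ∉ P) :
    1 + ∑ a ∈ R.parPos P, ⌊-rsPair a (R.α b)⌋₊ ≤ (R.parPos (insert b P) \ R.parPos P).card := by
  set S := (R.parPos P).sigma fun a => Finset.range ⌊-rsPair a (R.α b)⌋₊
  let f : (Σ _ : EuclideanSpace ℝ (Fin d), ℕ) → EuclideanSpace ℝ (Fin d) :=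
    fun x => x.1 + ((x.2 + 1 : ℕ) : ℝ) • R.α b
  have hmaps : ∀ x ∈ S, f x ∈ (R.parPos (insert b P) \ R.parPos P).erase (R.α b) := by
    rintro ⟨a, k⟩ hx
    obtain ⟨ha, hk⟩ := Finset.mem_sigma.mp hx
    refine Finset.mem_erase.mpr ⟨fun h => notMem_span_alpha_of_mem_parPos hb ha ?_,
      add_smul_alpha_mem_parPos_insert_sdiff hb ha k.succ_pos (Finset.mem_range.mp hk)⟩
    refine Submodule.mem_span_singleton.mpr ⟨-k, ?_⟩
    have : a = R.α b - ((k + 1 : ℕ) : ℝ) • R.α b := eq_sub_of_add_eq h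
    rw [this]
    push_cast
    module
  have hinj : Set.InjOn f S := by
    rintro ⟨a, k⟩ hx ⟨a', k'⟩ hx' h
    have hspan := sub_mem (mem_parPos.mp (Finset.mem_sigma.mp hx').1).2
      (mem_parPos.mp (Finset.mem_sigma.mp hx).1).2
    have hdiff : a' - a = (((k + 1 : ℕ) : ℝ) - ((k' + 1 : ℕ) : ℝ)) • R.α b := by
      have h' : a + ((k + 1 : ℕ) : ℝ) • R.α b = a' + ((k' + 1 : ℕ) : ℝ) • R.α b := h
      linear_combination (norm := module) h'.symm
    have hkk : k = k' := by
      have := eq_zero_of_smul_alpha_mem_span hb (hdiff ▸ hspan)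
      push_cast at this
      exact_mod_cast (by linarith : (k : ℝ) = k')
    subst hkk
    simp only [f, add_left_inj] at h
    rw [h]
  have hS : S.card = ∑ a ∈ R.parPos P, ⌊-rsPair a (R.α b)⌋₊ := by simp [S]
  have := Finset.card_le_card_of_injOn f hmaps hinj
  have := Finset.card_erase_add_one (alpha_mem_parPos_insert_sdiff (R := R) hb)
  omega

lemma sum_rsPair_sdiff_parPos_sub_one_le (hb : b ∉ P) :
    (∑ a ∈ R.posRoots \ R.parPos P, rsPair a (R.α b)) - 1
      ≤ ((R.parPos (insert b P) \ R.parPos P).card : ℝ) := by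
  calc (∑ a ∈ R.posRoots \ R.parPos P, rsPair a (R.α b)) - 1
      = 1 + ∑ a ∈ R.parPos P, -rsPair a (R.α b) := by
        rw [Finset.sum_sdiff_eq_sub parPos_subset_posRoots, R.sum_rsPair_posRoots,
          Finset.sum_neg_distrib]
        ring
    _ ≤ 1 + ∑ a ∈ R.parPos P, (⌊-rsPair a (R.α b)⌋₊ : ℝ) := by
        gcongr with a ha
        rw [R.natFloor_neg_rsPair (R.posRoots_subset (parPos_subset_posRoots ha)) (R.α_mem b)]
        exact le_max_left _ _
    _ ≤ _ := by exact_mod_cast R.card_parPos_insert_sdiff_ge hb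

lemma disjoint_parPos_insert_sdiff {b' : Fin n} (hb : b ∉ P) (hb' : b' ∉ P) (hne : b ≠ b') :
    Disjoint (R.parPos (insert b P) \ R.parPos P) (R.parPos (insert b' P) \ R.parPos P) := by
  refine Finset.disjoint_left.mpr fun r hr hr' => (Finset.mem_sdiff.mp hr).2 ?_
  obtain ⟨hpos, hspan⟩ := mem_parPos.mp (Finset.mem_sdiff.mp hr).1
  have hspan' := (mem_parPos.mp (Finset.mem_sdiff.mp hr').1).2
  refine mem_parPos.mpr ⟨hpos, Submodule.span_mono (Set.image_mono ?_)
    (R.indep.mem_span_image_inter hspan hspan')⟩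
  intro i ⟨hi, hi'⟩
  simp only [Finset.coe_insert, Set.mem_insert_iff, Finset.mem_coe] at hi hi'
  aesop

lemma sum_card_parPos_insert_sdiff_le :
    ∑ b ∈ Finset.univ \ P, (R.parPos (insert b P) \ R.parPos P).card
      ≤ (R.posRoots \ R.parPos P).card := by
  rw [← Finset.card_biUnion fun b hb b' hb' hne => disjoint_parPos_insert_sdiff
    (Finset.mem_sdiff.mp hb).2 (Finset.mem_sdiff.mp hb').2 hne]
  refine Finset.card_le_card (Finset.biUnion_subset.mpr fun b _ => ?_)
  exact Finset.sdiff_subset_sdiff parPos_subset_posRoots le_rfl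

end Parabolic

end RootSystemBase

/-- For any subset `Δ_P ⊆ Δ` of the simple roots,
`∑_{β ∈ Δ \\ Δ_P} (∑_{α ∈ Φ⁺ \\ Φ_{Δ_P}⁺} ⟨α, β^∨⟩ − 1) ≤ |Φ⁺ \\ Φ_{Δ_P}⁺|`. -/
theorem statement15 {n d : ℕ} (R : RootSystemBase n d) (P : Finset (Fin n)) :
    ∑ b ∈ Finset.univ \ P,
        ((∑ a ∈ R.posRoots \ R.parPos P, rsPair a (R.α b)) - 1)
      ≤ ((R.posRoots \ R.parPos P).card : ℝ) :=
  calc _ ≤ ∑ b ∈ Finset.univ \ P, ((R.parPos (insert b P) \ R.parPos P).card : ℝ) :=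
        Finset.sum_le_sum fun b hb =>
          RootSystemBase.sum_rsPair_sdiff_parPos_sub_one_le (Finset.mem_sdiff.mp hb).2
    _ ≤ _ := by exact_mod_cast RootSystemBase.sum_card_parPos_insert_sdiff_le
end
end
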